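/- arXiv:1407.7017 — 3 statements merged into one kernel-verified Lean document; each statement's English description precedes it below -/
import Mathlib

section
/- For every chordal graph G, the positive zero forcing number satisfies Z_+(G) = |V(G)| − cc(G), where cc(G) is the clique cover number of G. -/
/-! Basic definitions for zero forcing and positive (semidefinite) zero forcing. -/

variable {V : Type*}

/-- The standard zero forcing colour change rule: a black vertex `u` (i.e. `u ∈ S`)
forces its unique white neighbour `w`. -/
def ZFForce (G : SimpleGraph V) (S : Set V) (u w : V) : Prop :=
  u ∈ S ∧ w ∉ S ∧ G.Adj u w ∧ ∀ x, G.Adj u x → x ∉ S → x = w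

/-- `x` and `y` are joined by a path of `G` all of whose vertices avoid `S`,
i.e. they lie in the same connected component of `G − S`. -/
def ConnOutside (G : SimpleGraph V) (S : Set V) : V → V → Prop :=
  Relation.ReflTransGen fun x y => x ∉ S ∧ y ∉ S ∧ G.Adj x y

/-- The positive (semidefinite) colour change rule: a black vertex `u` forces a white
neighbour `w` provided `w` is the only white neighbour of `u` lying in the connected
component of `G − S` containing `w`. -/
def PSDForce (G : SimpleGraph V) (S : Set V) (u w : V) : Prop :=
  u ∈ S ∧ w ∉ S ∧ G.Adj u w ∧
    ∀ x, G.Adj u x → x ∉ S → ConnOutside G S x w → x = w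

/-- A list of forces, applied in order starting with black set `S`, is a valid sequence
of applications of the standard colour change rule. -/
def ZFValid (G : SimpleGraph V) : Set V → List (V × V) → Prop
  | _, [] => True
  | S, p :: L => ZFForce G S p.1 p.2 ∧ ZFValid G (insert p.2 S) L

/-- A list of forces, applied in order starting with black set `S`, is a valid sequence
of applications of the positive colour change rule. -/
def PSDValid (G : SimpleGraph V) : Set V → List (V × V) → Prop
  | _, [] => True
  | S, p :: L => PSDForce G S p.1 p.2 ∧ PSDValid G (insert p.2 S) L

/-- The black set resulting from performing the given list of forces. -/
def applyForces (S : Set V) (L : List (V × V)) : Set V :=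
  L.foldl (fun T p => insert p.2 T) S

/-- `B` is a zero forcing set: repeatedly applying the colour change rule starting from
`B` colours every vertex black. -/
def IsZeroForcingSet (G : SimpleGraph V) (B : Set V) : Prop :=
  ∃ L : List (V × V), ZFValid G B L ∧ applyForces B L = Set.univ

/-- `B` is a positive zero forcing set. -/
def IsPSDForcingSet (G : SimpleGraph V) (B : Set V) : Prop :=
  ∃ L : List (V × V), PSDValid G B L ∧ applyForces B L = Set.univ

/-- The zero forcing number `Z(G)`. -/
noncomputable def zfNum (G : SimpleGraph V) : ℕ :=
  sInf {n | ∃ B : Set V, B.ncard = n ∧ IsZeroForcingSet G B}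

/-- The positive (semidefinite) zero forcing number `Z₊(G)`. -/
noncomputable def psdNum (G : SimpleGraph V) : ℕ :=
  sInf {n | ∃ B : Set V, B.ncard = n ∧ IsPSDForcingSet G B}

/-- A clique cover of `G`: a finite family of cliques covering every edge of `G`. -/
def IsCliqueCover (G : SimpleGraph V) (𝒞 : Finset (Set V)) : Prop :=
  (∀ C ∈ 𝒞, G.IsClique C) ∧ ∀ u v, G.Adj u v → ∃ C ∈ 𝒞, u ∈ C ∧ v ∈ C

/-- The clique cover number `cc(G)`. -/
noncomputable def ccNum (G : SimpleGraph V) : ℕ :=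
  sInf {n | ∃ 𝒞 : Finset (Set V), 𝒞.card = n ∧ IsCliqueCover G 𝒞}

/-- A tree cover of `G`: a family of vertex-disjoint induced subtrees whose vertex sets
partition `V(G)`. -/
def IsTreeCover (G : SimpleGraph V) (𝒯 : Finset (Set V)) : Prop :=
  (∀ S ∈ 𝒯, (G.induce S).IsTree) ∧
    (∀ S ∈ 𝒯, ∀ T ∈ 𝒯, S ≠ T → Disjoint S T) ∧
    ∀ v : V, ∃ S ∈ 𝒯, v ∈ S

/-- The tree cover number `T(G)`. -/
noncomputable def tcNum (G : SimpleGraph V) : ℕ :=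
  sInf {n | ∃ 𝒯 : Finset (Set V), 𝒯.card = n ∧ IsTreeCover G 𝒯}

/-- A graph is chordal if it contains no induced cycle on four or more vertices. -/
def IsChordal (G : SimpleGraph V) : Prop :=
  ∀ n, 4 ≤ n → IsEmpty (SimpleGraph.cycleGraph n ↪g G)

/-- `C` is a maximal clique of `G`. -/
def IsMaxClique (G : SimpleGraph V) (C : Set V) : Prop :=
  G.IsClique C ∧ ∀ D : Set V, G.IsClique D → C ⊆ D → C = D

/-- A chordal graph is non-trivial if it has at least two distinct maximal cliques. -/
def NonTrivialChordal (G : SimpleGraph V) : Prop :=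
  IsChordal G ∧ ∃ C₁ C₂ : Set V, IsMaxClique G C₁ ∧ IsMaxClique G C₂ ∧ C₁ ≠ C₂

/-- A vertex is simplicial if its neighbourhood induces a clique. -/
def IsSimplicial (G : SimpleGraph V) (v : V) : Prop :=
  G.IsClique (G.neighborSet v)

/-!
Lower bound, for every graph: a positive force `u → w` turns black every clique containing both
`u` and `w` (a second white vertex of such a clique would be adjacent to `u` and in the component
of `w`). So distinct forces blacken distinct cliques of any clique cover, and
`|V| ≤ Z₊(G) + cc(G)`.

Upper bound, for chordal graphs: by induction, removing a simplicial vertex `v` (Dirac). If its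
edges are still uncovered, `N[v]` is added to the cover, `v` stays white and is forced last; the
forces of the smaller graph remain valid because they are chosen to avoid the edges of `N(v)`,
whose white vertices all lie in one component anyway. Otherwise `v` is added as a black vertex.
-/

variable {G : SimpleGraph V}

namespace SimpleGraph

lemma cycleGraph_adj_iff_of_lt {n : ℕ} {i j : Fin n} (h : i < j) :
    (cycleGraph n).Adj i j ↔ j.val = i.val + 1 ∨ (i.val = 0 ∧ j.val = n - 1) := by
  rw [cycleGraph_adj', Fin.coe_sub_iff_lt.2 h, Fin.coe_sub_iff_le.2 h.le]
  have := j.isLt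
  have : i.val < j.val := h
  omega

lemma Walk.not_adj_getVert_of_length_eq_dist {u v : V} {q : G.Walk u v}
    (hq : q.length = G.dist u v) {i j : ℕ} (hij : i + 1 < j) (hj : j ≤ q.length) :
    ¬G.Adj (q.getVert i) (q.getVert j) := fun h => by
  have := G.dist_le ((q.take i).append (cons h (q.drop j)))
  simp only [length_append, take_length, length_cons, drop_length] at this
  omega

end SimpleGraph

open SimpleGraph

lemma ConnOutside.symm {S : Set V} {x y : V} (h : ConnOutside G S x y) : ConnOutside G S y x := by
  induction h with
  | refl => exact .refl
  | tail _ hstep ih => exact .head ⟨hstep.2.1, hstep.1, hstep.2.2.symm⟩ ih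

lemma ConnOutside.notMem {S : Set V} {x y : V} (h : ConnOutside G S x y) (hx : x ∉ S) : y ∉ S := by
  induction h with
  | refl => exact hx
  | tail _ hstep _ => exact hstep.2.1

/-- Blackening a vertex whose white neighbours form a clique does not disconnect the rest of the
white graph. -/
lemma ConnOutside.insert_of_isClique {S : Set V} {v x y : V}
    (hv : G.IsClique (G.neighborSet v \ S)) (h : ConnOutside G S x y) (hx : x ≠ v) :
    (y ≠ v → ConnOutside G (insert v S) x y) ∧
      (y = v → ∃ z, G.Adj v z ∧ z ∉ S ∧ ConnOutside G (insert v S) x z) := by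
  induction h with
  | refl => exact ⟨fun _ => .refl, fun h => absurd h hx⟩
  | @tail b c _ hbc ih =>
    obtain ⟨hb, hc, hadj⟩ := hbc
    refine ⟨fun hcv => ?_, fun hcv => ?_⟩
    · by_cases hbv : b = v
      · obtain ⟨z, hvz, hz, hxz⟩ := ih.2 hbv
        by_cases hzc : z = c
        · exact hzc ▸ hxz
        refine hxz.tail ⟨?_, ?_, hv ⟨hvz, hz⟩ ⟨hbv ▸ hadj, hc⟩ hzc⟩ <;>
          simp only [Set.mem_insert_iff, not_or]
        exacts [⟨(G.ne_of_adj hvz).symm, hz⟩, ⟨hcv, hc⟩]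
      · exact (ih.1 hbv).tail ⟨by simp [hbv, hb], by simp [hcv, hc], hadj⟩
    · subst hcv
      exact ⟨b, hadj.symm, hb, ih.1 (G.ne_of_adj hadj)⟩

lemma applyForces_append (S : Set V) (L₁ L₂ : List (V × V)) :
    applyForces S (L₁ ++ L₂) = applyForces (applyForces S L₁) L₂ :=
  List.foldl_append

lemma applyForces_insert (v : V) (S : Set V) (L : List (V × V)) :
    applyForces (insert v S) L = insert v (applyForces S L) := by
  induction L generalizing S with
  | nil => rfl
  | cons p L ih => exact (congrArg (applyForces · L) (Set.insert_comm p.2 v S)).trans (ih _)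

lemma psdValid_append {S : Set V} {L₁ L₂ : List (V × V)} :
    PSDValid G S (L₁ ++ L₂) ↔ PSDValid G S L₁ ∧ PSDValid G (applyForces S L₁) L₂ := by
  induction L₁ generalizing S with
  | nil => exact (true_and _).symm.to_iff
  | cons p L ih => exact (and_congr_right fun _ => ih).trans and_assoc.symm

lemma PSDValid.notMem_applyForces {S : Set V} {v : V} {L : List (V × V)}
    (h : PSDValid G (insert v S) L) (hv : v ∉ S) : v ∉ applyForces S L := by
  induction L generalizing S with
  | nil => exact hv
  | cons p L ih =>
    have hp : p.2 ≠ v := fun hp => h.1.2.1 (by simp [hp])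
    exact ih (Set.insert_comm p.2 v S ▸ h.2) (by simp [hv, hp.symm])

lemma ncard_applyForces_le (S : Set V) (L : List (V × V)) :
    (applyForces S L).ncard ≤ S.ncard + L.length := by
  induction L generalizing S with
  | nil => exact Nat.le_add_right _ _
  | cons p L ih =>
    have := Set.ncard_insert_le p.2 S
    have := ih (insert p.2 S)
    simp only [applyForces, List.foldl_cons, List.length_cons] at *
    omega

lemma PSDForce.subset_insert_of_isClique {S C : Set V} {u w : V} (hf : PSDForce G S u w)
    (hC : G.IsClique C) (hu : u ∈ C) (hw : w ∈ C) : C ⊆ insert w S := by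
  intro x hx
  by_contra hxS
  simp only [Set.mem_insert_iff, not_or] at hxS
  have hxu : x ≠ u := fun h => hxS.2 (h ▸ hf.1)
  exact hxS.1 <| hf.2.2.2 x (hC hu hx hxu.symm) hxS.2
    (.single ⟨hxS.2, hf.2.1, hC hx hw hxS.1⟩)

open Classical in
/-- Each force blackens a clique of the cover that still had a white vertex. -/
lemma PSDValid.length_le_card_filter {S : Set V} {L : List (V × V)} {𝒞 : Finset (Set V)}
    (hL : PSDValid G S L) (h𝒞 : IsCliqueCover G 𝒞) :
    L.length ≤ (𝒞.filter fun C => ¬C ⊆ S).card := by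
  induction L generalizing S with
  | nil => exact Nat.zero_le _
  | cons p L ih =>
    obtain ⟨hf, hL⟩ := hL
    obtain ⟨C, hC, hu, hw⟩ := h𝒞.2 _ _ hf.2.2.1
    have hlt : (𝒞.filter fun C => ¬C ⊆ insert p.2 S).card < (𝒞.filter fun C => ¬C ⊆ S).card := by
      refine Finset.card_lt_card ⟨fun D hD => ?_, fun h => ?_⟩
      · simp only [Finset.mem_filter] at hD ⊢
        exact ⟨hD.1, fun hDS => hD.2 (hDS.trans (Set.subset_insert _ _))⟩
      have := Finset.mem_filter.1 (h (Finset.mem_filter.2 ⟨hC, fun h => hf.2.1 (h hw)⟩))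
      exact this.2 (hf.subset_insert_of_isClique (h𝒞.1 C hC) hu hw)
    exact (Nat.succ_le_of_lt (lt_of_le_of_lt (ih hL) hlt))

lemma IsPSDForcingSet.card_le_ncard_add_card {B : Set V} {𝒞 : Finset (Set V)}
    (hB : IsPSDForcingSet G B) (h𝒞 : IsCliqueCover G 𝒞) : Nat.card V ≤ B.ncard + 𝒞.card := by
  obtain ⟨L, hL, huniv⟩ := hB
  calc Nat.card V = (applyForces B L).ncard := by rw [huniv, Set.ncard_univ]
    _ ≤ B.ncard + L.length := ncard_applyForces_le B L
    _ ≤ B.ncard + 𝒞.card := by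
      gcongr
      classical
      exact (hL.length_le_card_filter h𝒞).trans (Finset.card_filter_le _ _)

lemma card_le_psdNum_add_ccNum (h𝒞 : ∃ 𝒞, IsCliqueCover G 𝒞) :
    Nat.card V ≤ psdNum G + ccNum G := by
  obtain ⟨B, hB, hBf⟩ := Nat.sInf_mem (s := {n | ∃ B : Set V, B.ncard = n ∧ IsPSDForcingSet G B})
    ⟨_, Set.univ, rfl, [], trivial, rfl⟩
  obtain ⟨𝒞, h𝒞, h𝒞c⟩ := Nat.sInf_mem
    (s := {n | ∃ 𝒞 : Finset (Set V), 𝒞.card = n ∧ IsCliqueCover G 𝒞})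
    (by obtain ⟨𝒞, h⟩ := h𝒞; exact ⟨_, 𝒞, rfl, h⟩)
  unfold psdNum ccNum
  exact hB ▸ h𝒞 ▸ hBf.card_le_ncard_add_card h𝒞c

lemma IsChordal.false_of_chordless_cycle (hG : IsChordal G) {n : ℕ} (hn : 4 ≤ n) (f : ℕ → V)
    (hf : ∀ i < n, ∀ j < n, f i = f j → i = j)
    (hadj : ∀ i j, i < j → j < n → (G.Adj (f i) (f j) ↔ j = i + 1 ∨ (i = 0 ∧ j = n - 1))) :
    False := by
  refine (hG n hn).false ⟨⟨fun i => f i, fun i j h => Fin.ext (hf i i.2 j j.2 h)⟩, ?_⟩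
  intro i j
  rcases lt_trichotomy i j with h | rfl | h
  · exact (hadj i j h j.2).trans (cycleGraph_adj_iff_of_lt h).symm
  · simp
  · rw [G.adj_comm, (cycleGraph n).adj_comm]
    exact (hadj j i h i.2).trans (cycleGraph_adj_iff_of_lt h).symm

lemma IsChordal.false_of_chordless_path_apex (hG : IsChordal G) {d : ℕ} (hd : 1 < d)
    (p : ℕ → V) {b : V} (hinj : ∀ i ≤ d, ∀ j ≤ d, p i = p j → i = j) (hb : ∀ i ≤ d, p i ≠ b)
    (hpath : ∀ i j, i < j → j ≤ d → (G.Adj (p i) (p j) ↔ j = i + 1))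
    (hapex : ∀ i ≤ d, (G.Adj (p i) b ↔ i = d ∨ i = 0)) : False := by
  refine hG.false_of_chordless_cycle (n := d + 2) (by omega)
    (fun i => if i ≤ d then p i else b) (fun i _ j _ hij => ?_) (fun i j hij hj => ?_)
  · by_cases hi : i ≤ d <;> by_cases hj : j ≤ d <;> simp only [hi, hj, if_true, if_false] at hij
    · exact hinj i hi j hj hij
    · exact absurd hij (hb i hi)
    · exact absurd hij.symm (hb j hj)
    · omega
  · have hi : i ≤ d := by omega
    by_cases hj' : j ≤ d
    · simp only [hi, hj', if_true, hpath i j hij hj']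
      omega
    · simp only [hi, hj', if_true, if_false, hapex i hi]
      omega

/-- A shortest path from `s₁` to `s₂` through `R` would close up through `b` to a chordless
cycle. -/
lemma IsChordal.adj_of_connOutside (hG : IsChordal G) {R : Set V} {b s₁ s₂ a₁ a₂ : V}
    (hR : ∀ y ∈ R, y ≠ b ∧ ¬G.Adj b y) (hb₁ : G.Adj b s₁) (hb₂ : G.Adj b s₂) (hs : s₁ ≠ s₂)
    (ha₁ : a₁ ∈ R) (h₁ : G.Adj s₁ a₁) (h₂ : G.Adj a₂ s₂) (hconn : ConnOutside G Rᶜ a₁ a₂) :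
    G.Adj s₁ s₂ := by
  by_contra hns
  set T : Set V := insert s₁ (insert s₂ R)
  set H : SimpleGraph V := ((⊤ : G.Subgraph).induce T).spanningCoe
  have hH : ∀ {x y}, H.Adj x y ↔ x ∈ T ∧ y ∈ T ∧ G.Adj x y := by
    simp [H, Subgraph.induce_adj]
  have ha₂ : a₂ ∈ R := by simpa using hconn.notMem (by simpa using ha₁)
  have hreach : H.Reachable s₁ s₂ := by
    have hmid : H.Reachable a₁ a₂ := (reachable_iff_reflTransGen _ _).2 <|
      Relation.ReflTransGen.mono (p := H.Adj)
        (fun x y ⟨hx, hy, hxy⟩ => hH.2 ⟨by simp_all [T], by simp_all [T], hxy⟩) _ _ hconn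
    refine ((Adj.reachable (hH.2 ⟨?_, ?_, h₁⟩)).trans hmid).trans
      (Adj.reachable (hH.2 ⟨?_, ?_, h₂⟩)) <;> simp [T, ha₁, ha₂]
  obtain ⟨q, hq⟩ := hreach.exists_walk_length_eq_dist
  have hd : 1 < q.length :=
    hq ▸ hreach.one_lt_dist_of_ne_of_not_adj hs fun h => hns (hH.1 h).2.2
  have hT : ∀ i, q.getVert i ∈ T := by
    intro i
    rcases Nat.eq_zero_or_pos i with rfl | hi
    · simp [T]
    rcases le_or_gt i q.length with hi' | hi'
    · have := q.adj_getVert_succ (i := i - 1) (by omega)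
      rw [Nat.sub_add_cancel hi] at this
      exact (hH.1 this).2.1
    · rw [q.getVert_of_length_le hi'.le]; simp [T]
  have hinj : ∀ i ≤ q.length, ∀ j ≤ q.length, q.getVert i = q.getVert j → i = j :=
    fun i hi j hj h => (q.isPath_of_length_eq_dist hq).getVert_injOn hi hj h
  have hinner : ∀ i, 0 < i → i < q.length → q.getVert i ∈ R := by
    intro i hi hi'
    rcases hT i with h | h | h
    · exact absurd (hinj i hi'.le 0 (by omega) (h.trans q.getVert_zero.symm)) (by omega)
    · exact absurd (hinj i hi'.le _ le_rfl (h.trans q.getVert_length.symm)) (by omega)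
    · exact h
  have hb : b ∉ T := by
    rintro (h | h | h)
    · exact G.irrefl (h ▸ hb₁)
    · exact G.irrefl (h ▸ hb₂)
    · exact (hR b h).1 rfl
  have hpath_adj : ∀ i j, i < j → j ≤ q.length →
      (G.Adj (q.getVert i) (q.getVert j) ↔ j = i + 1) := by
    refine fun i j hij hj => ⟨fun h => ?_, fun h => ?_⟩
    · by_contra hne
      exact q.not_adj_getVert_of_length_eq_dist hq (by omega) hj (hH.2 ⟨hT i, hT j, h⟩)
    · subst h
      exact (hH.1 (q.adj_getVert_succ (by omega))).2.2
  have hapex_adj : ∀ i ≤ q.length, (G.Adj (q.getVert i) b ↔ i = q.length ∨ i = 0) := by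
    refine fun i hi => ⟨fun h => ?_, ?_⟩
    · by_contra hne
      exact (hR _ (hinner i (by omega) (by omega))).2 h.symm
    · rintro (rfl | rfl)
      · simpa using hb₂.symm
      · simpa using hb₁.symm
  exact hG.false_of_chordless_path_apex (b := b) hd q.getVert hinj
    (fun i _ h => hb (h ▸ hT i)) hpath_adj hapex_adj

lemma IsChordal.exists_simplicial_not_adj (hG : IsChordal G) {U : Finset V}
    (ih : ∀ W ⊂ U, G.IsClique (W : Set V) ∨ ∃ a ∈ W, ∃ b ∈ W, a ≠ b ∧ ¬G.Adj a b ∧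
      G.IsClique (G.neighborSet a ∩ W) ∧ G.IsClique (G.neighborSet b ∩ W))
    {a b : V} (ha : a ∈ U) (hb : b ∈ U) (hab : a ≠ b) (hnab : ¬G.Adj a b) :
    ∃ v ∈ U, v ≠ b ∧ ¬G.Adj v b ∧ G.IsClique (G.neighborSet v ∩ U) := by
  classical
  set R : Set V := {y | y ∈ U ∧ y ≠ b ∧ ¬G.Adj b y}
  set A : Set V := {y | ConnOutside G Rᶜ a y}
  have hAR : ∀ y ∈ A, y ∈ R := fun y hy => by
    simpa using ConnOutside.notMem hy (by simpa [R] using ⟨ha, hab, fun h => hnab h.symm⟩)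
  set U₁ := U.filter fun y => ∃ z ∈ A, y = z ∨ G.Adj y z
  have hU₁ : U₁ ⊂ U := by
    refine Finset.filter_ssubset.2 ⟨b, hb, ?_⟩
    rintro ⟨z, hz, rfl | hbz⟩
    · exact (hAR _ hz).2.1 rfl
    · exact (hAR _ hz).2.2 hbz
  -- a vertex of `A` has all its neighbours in `U₁`
  have hsimp : ∀ v ∈ A, G.IsClique (G.neighborSet v ∩ U₁) →
      v ∈ U ∧ v ≠ b ∧ ¬G.Adj v b ∧ G.IsClique (G.neighborSet v ∩ U) := by
    refine fun v hv hcl => ⟨(hAR v hv).1, (hAR v hv).2.1, fun h => (hAR v hv).2.2 h.symm,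
      hcl.subset ?_⟩
    rintro y ⟨hvy, hy⟩
    exact ⟨hvy, by simpa [U₁] using ⟨hy, v, hv, Or.inr hvy.symm⟩⟩
  have hS : G.IsClique {y | y ∈ U₁ ∧ y ∉ A} := by
    have hbS : ∀ y ∈ U₁, y ∉ A → ∃ z ∈ A, G.Adj b y ∧ G.Adj y z := by
      intro y hy hyA
      obtain ⟨hyU, z, hz, rfl | hyz⟩ := Finset.mem_filter.1 hy
      · exact absurd hz hyA
      refine ⟨z, hz, ?_, hyz⟩
      by_contra hby
      have hyb : y ≠ b := by rintro rfl; exact (hAR z hz).2.2 hyz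
      exact hyA (Relation.ReflTransGen.tail hz ⟨by simpa using hAR z hz, by simpa [R] using
        ⟨hyU, hyb, hby⟩, hyz.symm⟩)
    rintro s₁ ⟨hs₁, hs₁A⟩ s₂ ⟨hs₂, hs₂A⟩ hs
    obtain ⟨z₁, hz₁, hb₁, h₁⟩ := hbS s₁ hs₁ hs₁A
    obtain ⟨z₂, hz₂, hb₂, h₂⟩ := hbS s₂ hs₂ hs₂A
    exact hG.adj_of_connOutside (fun y hy => ⟨hy.2.1, hy.2.2⟩) hb₁ hb₂ hs (hAR z₁ hz₁) h₁
      h₂.symm (ConnOutside.symm hz₁ |>.trans hz₂)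
  rcases ih U₁ hU₁ with hcl | ⟨v₁, hv₁, v₂, hv₂, hne, hn, hs₁, hs₂⟩
  · exact ⟨a, hsimp a .refl (hcl.subset Set.inter_subset_right)⟩
  · by_cases hv₁A : v₁ ∈ A
    · exact ⟨v₁, hsimp v₁ hv₁A hs₁⟩
    by_cases hv₂A : v₂ ∈ A
    · exact ⟨v₂, hsimp v₂ hv₂A hs₂⟩
    exact absurd (hS ⟨hv₁, hv₁A⟩ ⟨hv₂, hv₂A⟩ hne) hn

/-- Dirac's lemma, relative to a finite vertex set `U`. -/
lemma IsChordal.isClique_or_exists_two_simplicial (hG : IsChordal G) (U : Finset V) :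
    G.IsClique (U : Set V) ∨ ∃ a ∈ U, ∃ b ∈ U, a ≠ b ∧ ¬G.Adj a b ∧
      G.IsClique (G.neighborSet a ∩ U) ∧ G.IsClique (G.neighborSet b ∩ U) := by
  induction U using Finset.strongInduction with
  | H U ih =>
    refine or_iff_not_imp_left.2 fun hU => ?_
    obtain ⟨a, ha, b, hb, hab, hnab⟩ : ∃ a ∈ U, ∃ b ∈ U, a ≠ b ∧ ¬G.Adj a b := by
      simpa [SimpleGraph.IsClique, Set.Pairwise] using hU
    obtain ⟨v₁, hv₁, hv₁b, hnv₁b, hs₁⟩ := hG.exists_simplicial_not_adj ih ha hb hab hnab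
    obtain ⟨v₂, hv₂, hv₂₁, hnv₂₁, hs₂⟩ :=
      hG.exists_simplicial_not_adj ih hb hv₁ hv₁b.symm fun h => hnv₁b h.symm
    exact ⟨v₁, hv₁, v₂, hv₂, hv₂₁.symm, fun h => hnv₂₁ h.symm, hs₁, hs₂⟩

lemma IsChordal.exists_isClique_neighborSet_inter (hG : IsChordal G) {U : Finset V}
    (hU : U.Nonempty) : ∃ v ∈ U, G.IsClique (G.neighborSet v ∩ U) := by
  rcases hG.isClique_or_exists_two_simplicial U with h | ⟨a, ha, -, -, -, -, hsa, -⟩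
  · obtain ⟨v, hv⟩ := hU
    exact ⟨v, hv, h.subset Set.inter_subset_right⟩
  · exact ⟨a, ha, hsa⟩

/-- Whitening `v` merges no components of the white graph, since the white neighbours of `v` form
a clique; it only gives the vertices of `K` the extra white neighbour `v`. -/
lemma PSDForce.of_insert {S K : Set V} {v u w : V} (hK : G.IsClique K)
    (hSK : G.neighborSet v \ S ⊆ K) (huK : G.Adj v u → u ∈ K) (huv : u ≠ v)
    (hKuw : ¬(u ∈ K ∧ w ∈ K)) (hf : PSDForce G (insert v S) u w) : PSDForce G S u w := by
  obtain ⟨hu, hw, huw, hclean⟩ := hf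
  simp only [Set.mem_insert_iff, not_or] at hu hw
  have huS : u ∈ S := hu.resolve_left huv
  refine ⟨huS, hw.2, huw, fun x hux hx hxw => ?_⟩
  have hvS := hK.subset hSK
  by_cases hxv : x = v
  · subst hxv
    obtain ⟨z, hvz, hz, hwz⟩ := (hxw.symm.insert_of_isClique hvS hw.1).2 rfl
    have hzK : z ∈ K := hSK ⟨hvz, hz⟩
    have hzu : u ≠ z := fun h => hz (h ▸ huS)
    have hzw := hclean z (hK (huK hux.symm) hzK hzu) (by simp [(G.ne_of_adj hvz).symm, hz])
      hwz.symm
    exact absurd ⟨huK hux.symm, hzw ▸ hzK⟩ hKuw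
  · exact hclean x hux (by simp [hxv, hx]) ((hxw.insert_of_isClique hvS hxv).1 hw.1)

lemma PSDValid.of_insert {S K : Set V} {v : V} {L : List (V × V)} (hK : G.IsClique K)
    (hvS : v ∉ S) (hSK : G.neighborSet v \ S ⊆ K)
    (hL : ∀ p ∈ L, p.1 ≠ v ∧ (G.Adj v p.1 → p.1 ∈ K) ∧ ¬(p.1 ∈ K ∧ p.2 ∈ K))
    (h : PSDValid G (insert v S) L) : PSDValid G S L := by
  induction L generalizing S with
  | nil => trivial
  | cons p L ih =>
    obtain ⟨hf, h⟩ := h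
    obtain ⟨hp₁, hp₁K, hpK⟩ := hL p List.mem_cons_self
    have hp₂ : p.2 ≠ v := fun h => hf.2.1 (by simp [h])
    refine ⟨hf.of_insert hK hSK hp₁K hp₁ hpK, ih (by simp [hvS, hp₂.symm]) ?_
      (fun q hq => hL q (List.mem_cons_of_mem _ hq)) (Set.insert_comm p.2 v S ▸ h)⟩
    exact fun y ⟨hvy, hy⟩ => hSK ⟨hvy, fun hyS => hy (Set.mem_insert_of_mem _ hyS)⟩

lemma PSDValid.append_force_of_insert {S K : Set V} {L : List (V × V)} {u : V}
    (hK : G.IsClique K) (hvS : v ∉ S) (hSK : G.neighborSet v \ S ⊆ K)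
    (hL : ∀ p ∈ L, p.1 ≠ v ∧ (G.Adj v p.1 → p.1 ∈ K) ∧ ¬(p.1 ∈ K ∧ p.2 ∈ K))
    (h : PSDValid G (insert v S) L) (huniv : applyForces (insert v S) L = Set.univ)
    (huv : u ≠ v) (hadj : G.Adj u v) :
    PSDValid G S (L ++ [(u, v)]) ∧ applyForces S (L ++ [(u, v)]) = Set.univ := by
  have hT : insert v (applyForces S L) = Set.univ := (applyForces_insert v S L).symm.trans huniv
  have hvT := h.notMem_applyForces hvS
  refine ⟨psdValid_append.2 ⟨h.of_insert hK hvS hSK hL, ⟨?_, trivial⟩⟩, ?_⟩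
  · refine ⟨?_, hvT, hadj, fun x _ hx _ => ?_⟩
    · exact (Set.eq_univ_iff_forall.1 hT u).resolve_left huv
    · exact (Set.eq_univ_iff_forall.1 hT x).resolve_right hx
  · rw [applyForces_append]
    exact hT

lemma Set.insert_union_compl_insert {B U : Set V} {v : V} (hv : v ∉ U) :
    insert v (B ∪ (insert v U)ᶜ) = B ∪ Uᶜ := by
  ext y
  by_cases hy : y = v <;> simp [hy, hv]

/-- A positive forcing process of `G[U]` (vertices outside `U` start black and never force)
from `black`, with a clique family covering the edges of `G[U]` that lie in no member of `𝒦`;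
the forces avoid the edges inside members of `𝒦`. -/
structure ForcingCover (G : SimpleGraph V) (𝒦 : Set (Set V)) (U : Finset V) where
  black : Set V
  forces : List (V × V)
  cliques : Finset (Set V)
  black_subset : black ⊆ U
  card_le : black.ncard + cliques.card ≤ U.card
  valid : PSDValid G (black ∪ (↑U)ᶜ) forces
  applyForces_eq : applyForces (black ∪ (↑U)ᶜ) forces = Set.univ
  forces_mem : ∀ p ∈ forces, p.1 ∈ U ∧ ∀ K ∈ 𝒦, ¬(p.1 ∈ K ∧ p.2 ∈ K)
  isClique : ∀ C ∈ cliques, G.IsClique C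
  covers : ∀ x ∈ U, ∀ y ∈ U, G.Adj x y →
    (∃ C ∈ cliques, x ∈ C ∧ y ∈ C) ∨ ∃ K ∈ 𝒦, x ∈ K ∧ y ∈ K

namespace ForcingCover

variable {𝒦 : Set (Set V)}

def empty (G : SimpleGraph V) (𝒦 : Set (Set V)) : ForcingCover G 𝒦 ∅ where
  black := ∅
  forces := []
  cliques := ∅
  black_subset := Set.empty_subset _
  card_le := by simp
  valid := trivial
  applyForces_eq := by simp [applyForces]
  forces_mem := by simp
  isClique := by simp
  covers := by simp

variable [DecidableEq V] {U : Finset V} {v : V}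

def insertBlack (F : ForcingCover G 𝒦 U) (hv : v ∉ U)
    (hcov : ∀ y ∈ U, G.Adj v y → ∃ K ∈ 𝒦, v ∈ K ∧ y ∈ K) : ForcingCover G 𝒦 (insert v U) where
  black := insert v F.black
  forces := F.forces
  cliques := F.cliques
  black_subset := by simpa using Set.insert_subset_insert F.black_subset
  card_le := by
    have := Set.ncard_insert_le v F.black
    have := F.card_le
    rw [Finset.card_insert_of_notMem hv]
    omega
  valid := by
    rw [Finset.coe_insert, Set.insert_union, Set.insert_union_compl_insert (by simpa using hv)]
    exact F.valid
  applyForces_eq := by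
    rw [Finset.coe_insert, Set.insert_union, Set.insert_union_compl_insert (by simpa using hv)]
    exact F.applyForces_eq
  forces_mem p hp := ⟨Finset.mem_insert_of_mem (F.forces_mem p hp).1, (F.forces_mem p hp).2⟩
  isClique := F.isClique
  covers x hx y hy hxy := by
    rw [Finset.mem_insert] at hx hy
    rcases hx with rfl | hx
    · obtain ⟨K, hK, hxK, hyK⟩ := hcov y (hy.resolve_left (G.ne_of_adj hxy).symm) hxy
      exact Or.inr ⟨K, hK, hxK, hyK⟩
    rcases hy with rfl | hy
    · obtain ⟨K, hK, hyK, hxK⟩ := hcov x hx hxy.symm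
      exact Or.inr ⟨K, hK, hxK, hyK⟩
    exact F.covers x hx y hy hxy

lemma valid_append_of_simplicial (F : ForcingCover G (insert (G.neighborSet v ∩ ↑U) 𝒦) U)
    (hv : v ∉ U) (hK : G.IsClique (G.neighborSet v ∩ ↑U)) {u : V} (hvu : G.Adj v u) :
    PSDValid G (F.black ∪ (↑(insert v U))ᶜ) (F.forces ++ [(u, v)]) ∧
      applyForces (F.black ∪ (↑(insert v U))ᶜ) (F.forces ++ [(u, v)]) = Set.univ := by
  have hins := Set.insert_union_compl_insert (B := F.black) (v := v) (U := ↑U) (by simpa using hv)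
  rw [Finset.coe_insert]
  refine PSDValid.append_force_of_insert hK ?_ ?_ (fun p hp => ?_) (hins ▸ F.valid)
    (hins ▸ F.applyForces_eq) (G.ne_of_adj hvu).symm hvu.symm
  · simp only [Set.mem_union, Set.mem_compl_iff, Set.mem_insert_iff, true_or, not_true_eq_false,
      or_false]
    exact fun h => hv (F.black_subset h)
  · rintro y ⟨hvy, hy⟩
    simp only [Set.mem_union, Set.mem_compl_iff, Set.mem_insert_iff, not_or, not_and,
      not_not] at hy
    exact ⟨hvy, (hy.2 (G.ne_of_adj hvy).symm)⟩
  · obtain ⟨hp₁, hpK⟩ := F.forces_mem p hp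
    exact ⟨fun h => hv (h ▸ hp₁), fun h => ⟨h, hp₁⟩, hpK _ (Set.mem_insert _ _)⟩

noncomputable def insertSimplicial (F : ForcingCover G (insert (G.neighborSet v ∩ ↑U) 𝒦) U)
    (hv : v ∉ U) (hK : G.IsClique (G.neighborSet v ∩ ↑U)) {u : V} (hu : u ∈ U) (hvu : G.Adj v u)
    (hu𝒦 : ∀ K ∈ 𝒦, ¬(u ∈ K ∧ v ∈ K)) : ForcingCover G 𝒦 (insert v U) where
  black := F.black
  forces := F.forces ++ [(u, v)]
  cliques := insert (insert v (G.neighborSet v ∩ ↑U)) F.cliques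
  black_subset := by simpa using F.black_subset.trans (Set.subset_insert v _)
  card_le := by
    have := Finset.card_insert_le (insert v (G.neighborSet v ∩ ↑U)) F.cliques
    have := F.card_le
    rw [Finset.card_insert_of_notMem hv]
    omega
  valid := (F.valid_append_of_simplicial hv hK hvu).1
  applyForces_eq := (F.valid_append_of_simplicial hv hK hvu).2
  forces_mem p hp := by
    rcases List.mem_append.1 hp with hp | hp
    · obtain ⟨hp₁, hpK⟩ := F.forces_mem p hp
      exact ⟨Finset.mem_insert_of_mem hp₁, fun K hK => hpK K (Set.mem_insert_of_mem _ hK)⟩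
    · obtain rfl := List.mem_singleton.1 hp
      exact ⟨Finset.mem_insert_of_mem hu, hu𝒦⟩
  isClique C hC := by
    rcases Finset.mem_insert.1 hC with rfl | hC
    · exact isClique_insert.2 ⟨hK, fun y hy _ => hy.1⟩
    · exact F.isClique C hC
  covers x hx y hy hxy := by
    have hN : ∀ y ∈ U, G.Adj v y → v ∈ insert v (G.neighborSet v ∩ ↑U) ∧
        y ∈ insert v (G.neighborSet v ∩ ↑U) := fun y hy hvy =>
      ⟨Set.mem_insert _ _, Set.mem_insert_of_mem _ ⟨hvy, hy⟩⟩
    rw [Finset.mem_insert] at hx hy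
    rcases hx with rfl | hx
    · exact Or.inl ⟨_, Finset.mem_insert_self _ _,
        hN y (hy.resolve_left (G.ne_of_adj hxy).symm) hxy⟩
    rcases hy with rfl | hy
    · exact Or.inl ⟨_, Finset.mem_insert_self _ _, (hN x hx hxy.symm).symm⟩
    rcases F.covers x hx y hy hxy with ⟨C, hC, hxC⟩ | ⟨K, hK, hxK⟩
    · exact Or.inl ⟨C, Finset.mem_insert_of_mem hC, hxC⟩
    rcases Set.mem_insert_iff.1 hK with rfl | hK
    · exact Or.inl ⟨_, Finset.mem_insert_self _ _, Set.mem_insert_of_mem _ hxK.1,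
        Set.mem_insert_of_mem _ hxK.2⟩
    · exact Or.inr ⟨K, hK, hxK⟩

end ForcingCover

lemma IsChordal.nonempty_forcingCover (hG : IsChordal G) (𝒦 : Set (Set V)) (U : Finset V) :
    Nonempty (ForcingCover G 𝒦 U) := by
  classical
  induction U using Finset.strongInduction generalizing 𝒦 with
  | H U ih =>
    rcases U.eq_empty_or_nonempty with rfl | hU
    · exact ⟨ForcingCover.empty G 𝒦⟩
    obtain ⟨v, hvU, hK⟩ := hG.exists_isClique_neighborSet_inter hU
    have hK' : G.IsClique (G.neighborSet v ∩ ↑(U.erase v)) :=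
      hK.subset (Set.inter_subset_inter_right _ (Finset.coe_subset.2 (U.erase_subset v)))
    have hv := U.notMem_erase v
    rw [← Finset.insert_erase hvU]
    by_cases hcov : ∀ y ∈ U.erase v, G.Adj v y → ∃ K ∈ 𝒦, v ∈ K ∧ y ∈ K
    · obtain ⟨F⟩ := ih _ (Finset.erase_ssubset hvU) 𝒦
      exact ⟨F.insertBlack hv hcov⟩
    · push Not at hcov
      obtain ⟨u, hu, hvu, hu𝒦⟩ := hcov
      obtain ⟨F⟩ := ih _ (Finset.erase_ssubset hvU) (insert (G.neighborSet v ∩ ↑(U.erase v)) 𝒦)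
      exact ⟨F.insertSimplicial hv hK' hu hvu fun K hK h => hu𝒦 K hK h.2 h.1⟩

lemma IsChordal.exists_psdForcingSet_cliqueCover [Fintype V] (hG : IsChordal G) :
    ∃ (B : Set V) (𝒞 : Finset (Set V)), IsPSDForcingSet G B ∧ IsCliqueCover G 𝒞 ∧
      B.ncard + 𝒞.card ≤ Fintype.card V := by
  obtain ⟨F⟩ := hG.nonempty_forcingCover ∅ Finset.univ
  refine ⟨F.black, F.cliques, ⟨F.forces, by simpa using F.valid, by simpa using F.applyForces_eq⟩,
    ⟨F.isClique, fun x y h => ?_⟩, F.card_le⟩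
  simpa using F.covers x (Finset.mem_univ x) y (Finset.mem_univ y) h

/-- For every chordal graph `G`,
`Z₊(G) = |V(G)| − cc(G)`. -/
theorem psdNum_eq_card_sub_ccNum {V : Type*} [Fintype V] (G : SimpleGraph V)
    (hG : IsChordal G) : psdNum G = Fintype.card V - ccNum G := by
  obtain ⟨B, 𝒞, hB, h𝒞, hcard⟩ := hG.exists_psdForcingSet_cliqueCover
  have hlow := card_le_psdNum_add_ccNum ⟨𝒞, h𝒞⟩
  have hpsd : psdNum G ≤ B.ncard := Nat.sInf_le ⟨B, rfl, hB⟩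
  have hcc : ccNum G ≤ 𝒞.card := Nat.sInf_le ⟨𝒞, rfl, h𝒞⟩
  rw [Nat.card_eq_fintype_card] at hlow
  omega
end

section
/- If G is a cycle of cliques C_1, C_2, …, C_k with k ≥ 3, then G has a zero forcing set of size |V(G)| − (k − 2) admitting a zero forcing process in which all forces form a single forcing chain (i.e., exactly one non-trivial forcing tree, which is a path). -/
/-! Basic definitions for zero forcing and positive (semidefinite) zero forcing. -/

variable {V : Type*}

/-- `G` is a cycle of cliques `C 1, C 2, …, C k` (indexed cyclically by `ZMod k`):
the `C i` are distinct maximal cliques covering all edges of `G`, and two distinct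
cliques intersect exactly when they are cyclically consecutive. -/
def IsCycleOfCliques (G : SimpleGraph V) (k : ℕ) (C : ZMod k → Set V) : Prop :=
  Function.Injective C ∧
    (∀ i, IsMaxClique G (C i)) ∧
    (∀ u v, G.Adj u v → ∃ i, u ∈ C i ∧ v ∈ C i) ∧
    ∀ i j : ZMod k, i ≠ j → ((C i ∩ C j).Nonempty ↔ (j = i + 1 ∨ i = j + 1))

/-!
Pick a vertex `w i` in each intersection `C i ∩ C (i + 1)` and a vertex `u ∈ C 1 \ C 2` (not
`w 0`, which may equal `w 1` when `k = 3`). A vertex lies only in cliques of neighbouring indices,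
so `u, w 1, …, w (k - 2)` is an induced path. Colour everything black except `w 1, …, w (k - 2)`:
each vertex of an induced path then has exactly one white neighbour, the next one, so the path is
forced from `u` as a single chain.
-/

structure IsInducedPathSeq (G : SimpleGraph V) (p : ℕ → V) (n : ℕ) : Prop where
  injOn : Set.InjOn p (Set.Iic n)
  adj_succ : ∀ i < n, G.Adj (p i) (p (i + 1))
  not_adj : ∀ i j, i + 2 ≤ j → j ≤ n → ¬G.Adj (p i) (p j)

def pathForces (p : ℕ → V) (s r : ℕ) : List (V × V) :=
  (List.range' s r).map fun i => (p i, p (i + 1))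

theorem isChain_pathForces (p : ℕ → V) (s r : ℕ) :
    (pathForces p s r).IsChain fun x y => x.2 = y.1 :=
  List.isChain_map _ |>.2 <| (List.isChain_range' s r 1).imp fun _ _ h => by rw [h]

theorem insert_compl_image_Ioc {p : ℕ → V} {n s : ℕ} (hp : Set.InjOn p (Set.Iic n))
    (hs : s < n) :
    insert (p (s + 1)) (p '' Set.Ioc s n)ᶜ = (p '' Set.Ioc (s + 1) n)ᶜ := by
  have hIoc : Set.Ioc s n = insert (s + 1) (Set.Ioc (s + 1) n) := by
    ext j; simp only [Set.mem_Ioc, Set.mem_insert_iff]; omega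
  have hnot : p (s + 1) ∉ p '' Set.Ioc (s + 1) n := by
    rintro ⟨j, hj, hpj⟩
    exact hj.1.ne' (hp hj.2 hs hpj)
  ext v
  rcases eq_or_ne v (p (s + 1)) with rfl | hv
  · simp [hnot]
  · simp [hIoc, hv, hv.symm]

namespace IsInducedPathSeq

variable {G : SimpleGraph V} {p : ℕ → V} {n : ℕ}

theorem zfForce (h : IsInducedPathSeq G p n) {s : ℕ} (hs : s < n) :
    ZFForce G (p '' Set.Ioc s n)ᶜ (p s) (p (s + 1)) := by
  refine ⟨?_, fun hw => hw ⟨s + 1, ⟨by omega, hs⟩, rfl⟩, h.adj_succ s hs, ?_⟩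
  · rintro ⟨j, hj, hpj⟩
    exact hj.1.ne' (h.injOn hj.2 hs.le hpj)
  · rintro x hx hxw
    obtain ⟨j, hj, rfl⟩ := not_not.1 hxw
    by_contra hne
    exact h.not_adj s j (by grind) hj.2 hx

theorem zfValid_pathForces (h : IsInducedPathSeq G p n) :
    ∀ r s, s + r = n → ZFValid G (p '' Set.Ioc s n)ᶜ (pathForces p s r) ∧
      applyForces (p '' Set.Ioc s n)ᶜ (pathForces p s r) = Set.univ
  | 0, s, hsr => ⟨trivial, by simp [pathForces, applyForces, ← hsr]⟩
  | r + 1, s, hsr => by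
    obtain ⟨hvalid, huniv⟩ := h.zfValid_pathForces r (s + 1) (by omega)
    rw [← insert_compl_image_Ioc h.injOn (by omega)] at hvalid huniv
    exact ⟨⟨h.zfForce (by omega), hvalid⟩, huniv⟩

theorem exists_single_chain [Fintype V] (h : IsInducedPathSeq G p n) (hn : 0 < n) :
    ∃ (B : Set V) (L : List (V × V)), B.ncard = Fintype.card V - n ∧
      ZFValid G B L ∧ applyForces B L = Set.univ ∧
      L.IsChain (fun p q => p.2 = q.1) ∧ (∃! b, b ∈ B ∧ ∃ w, (b, w) ∈ L) := by
  obtain ⟨hvalid, huniv⟩ := h.zfValid_pathForces n 0 (zero_add n)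
  have hwhite : (p '' Set.Ioc 0 n).ncard = n := by
    rw [(h.injOn.mono Set.Ioc_subset_Iic_self).ncard_image, ← Finset.coe_Ioc,
      Set.ncard_coe_finset, Nat.card_Ioc, Nat.sub_zero]
  refine ⟨_, _, ?_, hvalid, huniv, isChain_pathForces p 0 n, p 0, ⟨?_, p 1, ?_⟩, ?_⟩
  · rw [Set.ncard_compl, hwhite, Nat.card_eq_fintype_card]
  · rintro ⟨j, hj, hpj⟩
    exact hj.1.ne' (h.injOn hj.2 (Nat.zero_le n) hpj)
  · exact List.mem_map.2 ⟨0, List.mem_range'_1.2 ⟨le_rfl, by omega⟩, rfl⟩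
  · rintro b ⟨hb, w, hbw⟩
    obtain ⟨i, hi, hpi⟩ := List.mem_map.1 hbw
    obtain rfl := congrArg Prod.fst hpi
    rcases Nat.eq_zero_or_pos i with rfl | hi0
    · rfl
    · exact absurd ⟨i, ⟨hi0, by grind⟩, rfl⟩ hb

end IsInducedPathSeq

theorem ZMod.natCast_eq_natCast_add_one_iff {k a b : ℕ} (ha : a < k) (hb : b < k) :
    (b : ZMod k) = a + 1 ↔ b = a + 1 ∨ b = 0 ∧ a + 1 = k := by
  rw [← Nat.cast_succ, ZMod.natCast_eq_natCast_iff', Nat.mod_eq_of_lt hb]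
  rcases (Nat.succ_le_of_lt ha).lt_or_eq with h | h
  · rw [Nat.mod_eq_of_lt h]; omega
  · rw [h, Nat.mod_self]; omega

namespace IsCycleOfCliques

variable {G : SimpleGraph V} {k : ℕ} {C : ZMod k → Set V}

theorem eq_or_consecutive_of_mem (hC : IsCycleOfCliques G k C) {a b : ℕ} (ha : a < k)
    (hb : b < k) {v : V} (hva : v ∈ C a) (hvb : v ∈ C b) :
    a = b ∨ a + 1 = b ∨ b + 1 = a ∨ (a = 0 ∧ b + 1 = k) ∨ (b = 0 ∧ a + 1 = k) := by
  by_cases hab : (a : ZMod k) = b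
  · rw [ZMod.natCast_eq_natCast_iff', Nat.mod_eq_of_lt ha, Nat.mod_eq_of_lt hb] at hab
    omega
  · rcases (hC.2.2.2 _ _ hab).1 ⟨v, hva, hvb⟩ with h | h
    · rw [ZMod.natCast_eq_natCast_add_one_iff ha hb] at h; omega
    · rw [ZMod.natCast_eq_natCast_add_one_iff hb ha] at h; omega

theorem exists_lt_mem_of_adj [NeZero k] (hC : IsCycleOfCliques G k C) {u v : V}
    (h : G.Adj u v) : ∃ m < k, u ∈ C m ∧ v ∈ C m := by
  obtain ⟨i, hu, hv⟩ := hC.2.2.1 u v h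
  exact ⟨i.val, i.val_lt, by rwa [ZMod.natCast_zmod_val], by rwa [ZMod.natCast_zmod_val]⟩

theorem not_subset (hC : IsCycleOfCliques G k C) {i j : ZMod k} (hij : i ≠ j) : ¬C i ⊆ C j :=
  fun h => hij (hC.1 ((hC.2.1 i).2 _ (hC.2.1 j).1 h))

theorem isInducedPathSeq_of_mem (hC : IsCycleOfCliques G k C) (hk : 3 ≤ k) {p : ℕ → V}
    (h_succ : ∀ j : ℕ, p j ∈ C ((j + 1 : ℕ) : ZMod k))
    (h_self : ∀ j : ℕ, 1 ≤ j → p j ∈ C (j : ZMod k))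
    (h_zero : p 0 ∉ C ((2 : ℕ) : ZMod k)) :
    IsInducedPathSeq G p (k - 2) := by
  -- The exception is the case `k = 3`, where all three cliques may share a vertex.
  have hloc : ∀ j m : ℕ, j ≤ k - 2 → m < k → p j ∈ C m →
      m = j ∨ m = j + 1 ∨ (j = 1 ∧ m = 0) := by
    intro j m hj hm hpm
    have := hC.eq_or_consecutive_of_mem (by omega) hm (h_succ j) hpm
    rcases Nat.eq_zero_or_pos j with rfl | hj0
    · obtain rfl | hm2 := eq_or_ne m 2
      · exact absurd hpm h_zero
      · omega
    · have := hC.eq_or_consecutive_of_mem (by omega) hm (h_self j hj0) hpm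
      omega
  have hne : ∀ i j : ℕ, i < j → j ≤ k - 2 → p i ≠ p j := by
    intro i j hij hj he
    have h1 := hloc j (i + 1) hj (by omega) (by rw [← he]; exact h_succ i)
    have h2 := hloc i (j + 1) (by omega) (by omega) (by rw [he]; exact h_succ j)
    omega
  have : NeZero k := ⟨by omega⟩
  refine ⟨fun i hi j hj he => ?_, fun i hi => ?_, fun i j hij hj hadj => ?_⟩
  · rcases lt_trichotomy i j with h | h | h
    · exact absurd he (hne i j h (Set.mem_Iic.1 hj))
    · exact h
    · exact absurd he.symm (hne j i h (Set.mem_Iic.1 hi))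
  · exact (hC.2.1 _).1 (h_succ i) (h_self (i + 1) (by omega))
      (hne i (i + 1) (by omega) (by omega))
  · obtain ⟨m, hm, hpi, hpj⟩ := hC.exists_lt_mem_of_adj hadj
    have := hloc i m (by omega) hm hpi
    have := hloc j m hj hm hpj
    omega

theorem exists_isInducedPathSeq (hC : IsCycleOfCliques G k C) (hk : 3 ≤ k) :
    ∃ p : ℕ → V, IsInducedPathSeq G p (k - 2) := by
  have : Fact (1 < k) := ⟨by omega⟩
  have hne_succ : ∀ i : ZMod k, i ≠ i + 1 := fun i h => one_ne_zero (left_eq_add.1 h)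
  choose w hw using fun i : ZMod k => (hC.2.2.2 i (i + 1) (hne_succ i)).2 (Or.inl rfl)
  obtain ⟨u, hu1, hu2⟩ := Set.not_subset.1 (hC.not_subset (hne_succ 1))
  refine ⟨fun j => if j = 0 then u else w j,
    hC.isInducedPathSeq_of_mem hk (fun j => ?_) (fun j hj => ?_) ?_⟩
  · rcases j with _ | j
    · simpa using hu1
    · simpa using (hw _).2
  · simpa [Nat.one_le_iff_ne_zero.1 hj] using (hw j).1
  · simpa [one_add_one_eq_two] using hu2

end IsCycleOfCliques

/-- If `G` is a cycle of cliques `C 1, …, C k` with `k ≥ 3`, then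
`G` has a zero forcing set of size `|V(G)| − (k − 2)` admitting a zero forcing process
in which all forces form a single forcing chain (consecutive forces are chained and
exactly one initial black vertex performs a force, so there is exactly one non-trivial
forcing tree, which is a path). -/
theorem cycleOfCliques_zf_single_chain {V : Type*} [Fintype V] (G : SimpleGraph V)
    (k : ℕ) (hk : 3 ≤ k) (C : ZMod k → Set V) (hC : IsCycleOfCliques G k C) :
    ∃ (B : Set V) (L : List (V × V)), B.ncard = Fintype.card V - (k - 2) ∧
      ZFValid G B L ∧ applyForces B L = Set.univ ∧
      List.Chain' (fun p q => p.2 = q.1) L ∧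
      (∃! b, b ∈ B ∧ ∃ w, (b, w) ∈ L) := by
  obtain ⟨p, hp⟩ := hC.exists_isInducedPathSeq hk
  exact hp.exists_single_chain (by omega)
end

section
/- Let G be a connected non-trivial chordal graph such that for every maximal clique C of G there exist two vertices x_C, y_C ∈ V(C) with the property that every other maximal clique C' of G with V(C') ∩ V(C) ≠ ∅ contains exactly one of x_C and y_C. Then the clique cover number of G equals the number of maximal cliques of G. -/
/-! Basic definitions for zero forcing and positive (semidefinite) zero forcing. -/

variable {V : Type*}

/-!
Every edge of `G` lies in a maximal clique, so the maximal cliques form a clique cover. Conversely,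
the hypothesis gives each maximal clique `C` a private edge `x_C y_C`: any other maximal clique
containing both `x_C` and `y_C` would meet `C` while containing both of them. In any clique cover,
the clique covering `x_C y_C` extends to a maximal clique, which must be `C`. So extending
each clique of a cover to a maximal clique reaches every maximal clique, and no cover is smaller.
-/

def HasPrivateEdge (G : SimpleGraph V) (C : Set V) : Prop :=
  ∃ x y, G.Adj x y ∧ ∀ C', IsMaxClique G C' → x ∈ C' → y ∈ C' → C' = C

lemma exists_isMaxClique_superset [Finite V] {G : SimpleGraph V} {C : Set V}
    (hC : G.IsClique C) : ∃ D, IsMaxClique G D ∧ C ⊆ D := by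
  obtain ⟨D, hD, hmax⟩ := Set.Finite.exists_maximalFor id {D : Set V | G.IsClique D ∧ C ⊆ D}
    (Set.toFinite _) ⟨C, hC, subset_rfl⟩
  exact ⟨D, ⟨hD.1, fun E hE hDE => subset_antisymm hDE (hmax ⟨hE, hD.2.trans hDE⟩ hDE)⟩, hD.2⟩

lemma isCliqueCover_maxCliques [Finite V] (G : SimpleGraph V) :
    IsCliqueCover G (Set.toFinite {C : Set V | IsMaxClique G C}).toFinset := by
  refine ⟨fun C hC => (Set.Finite.mem_toFinset _ |>.1 hC).1, fun u v huv => ?_⟩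
  obtain ⟨D, hD, huvD⟩ := exists_isMaxClique_superset (SimpleGraph.isClique_pair.2 fun _ => huv)
  exact ⟨D, Set.Finite.mem_toFinset _ |>.2 hD, huvD (by simp), huvD (by simp)⟩

lemma ccNum_le_ncard_maxCliques [Finite V] (G : SimpleGraph V) :
    ccNum G ≤ {C : Set V | IsMaxClique G C}.ncard := by
  rw [Set.ncard_eq_toFinset_card _ (Set.toFinite _)]
  exact Nat.sInf_le ⟨_, rfl, isCliqueCover_maxCliques G⟩

lemma ncard_maxCliques_le_card_of_isCliqueCover [Finite V] {G : SimpleGraph V}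
    (hpriv : ∀ C, IsMaxClique G C → HasPrivateEdge G C) {𝒞 : Finset (Set V)}
    (h𝒞 : IsCliqueCover G 𝒞) : {C : Set V | IsMaxClique G C}.ncard ≤ 𝒞.card := by
  choose! E hEmax hEsup using fun D (hD : D ∈ 𝒞) => exists_isMaxClique_superset (h𝒞.1 D hD)
  have hsurj : {C : Set V | IsMaxClique G C} ⊆ E '' 𝒞 := by
    intro C hC
    obtain ⟨x, y, hxy, hprivC⟩ := hpriv C hC
    obtain ⟨D, hD, hxD, hyD⟩ := h𝒞.2 x y hxy
    exact ⟨D, hD, hprivC _ (hEmax D hD) (hEsup D hD hxD) (hEsup D hD hyD)⟩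
  calc {C : Set V | IsMaxClique G C}.ncard ≤ (E '' 𝒞).ncard := Set.ncard_le_ncard hsurj
    _ ≤ (𝒞 : Set (Set V)).ncard := Set.ncard_image_le 𝒞.finite_toSet
    _ = 𝒞.card := Set.ncard_coe_finset 𝒞

lemma ncard_maxCliques_le_ccNum [Finite V] {G : SimpleGraph V}
    (hpriv : ∀ C, IsMaxClique G C → HasPrivateEdge G C) :
    {C : Set V | IsMaxClique G C}.ncard ≤ ccNum G :=
  le_csInf ⟨_, _, rfl, isCliqueCover_maxCliques G⟩ fun _ ⟨_, hcard, h𝒞⟩ =>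
    hcard ▸ ncard_maxCliques_le_card_of_isCliqueCover hpriv h𝒞

lemma hasPrivateEdge_of_forall_mem_xor {G : SimpleGraph V} {C : Set V} (hC : IsMaxClique G C)
    {x y : V} (hx : x ∈ C) (hy : y ∈ C) (hxy : x ≠ y)
    (hsplit : ∀ C', IsMaxClique G C' → C' ≠ C → (C' ∩ C).Nonempty →
      (x ∈ C' ∧ y ∉ C') ∨ (x ∉ C' ∧ y ∈ C')) :
    HasPrivateEdge G C := by
  refine ⟨x, y, hC.1 hx hy hxy, fun C' hC' hxC' hyC' => ?_⟩
  by_contra hne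
  rcases hsplit C' hC' hne ⟨x, hxC', hx⟩ with ⟨-, hy'⟩ | ⟨hx', -⟩
  exacts [hy' hyC', hx' hxC']

theorem ccNum_eq_card_maxCliques_general {V : Type*} [Fintype V] (G : SimpleGraph V)
    (h : ∀ C : Set V, IsMaxClique G C →
      ∃ x ∈ C, ∃ y ∈ C, x ≠ y ∧
        ∀ C' : Set V, IsMaxClique G C' → C' ≠ C → (C' ∩ C).Nonempty →
          ((x ∈ C' ∧ y ∉ C') ∨ (x ∉ C' ∧ y ∈ C'))) :
    ccNum G = {C : Set V | IsMaxClique G C}.ncard := by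
  refine le_antisymm (ccNum_le_ncard_maxCliques G) (ncard_maxCliques_le_ccNum fun C hC => ?_)
  obtain ⟨x, hx, y, hy, hxy, hsplit⟩ := h C hC
  exact hasPrivateEdge_of_forall_mem_xor hC hx hy hxy hsplit

/-- If `G` is a connected non-trivial chordal graph in which every
maximal clique `C` has two vertices such that every other maximal clique meeting `C`
contains exactly one of them, then `cc(G)` equals the number of maximal cliques. -/
theorem ccNum_eq_card_maxCliques {V : Type*} [Fintype V] (G : SimpleGraph V)
    (hconn : G.Connected) (hG : NonTrivialChordal G)
    (h : ∀ C : Set V, IsMaxClique G C →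
      ∃ x ∈ C, ∃ y ∈ C, x ≠ y ∧
        ∀ C' : Set V, IsMaxClique G C' → C' ≠ C → (C' ∩ C).Nonempty →
          ((x ∈ C' ∧ y ∉ C') ∨ (x ∉ C' ∧ y ∈ C'))) :
    ccNum G = {C : Set V | IsMaxClique G C}.ncard :=
  ccNum_eq_card_maxCliques_general G h
end
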